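/- arXiv:2501.01358 — 2 statements merged into one kernel-verified Lean document; each statement's English description precedes it below -/
import Mathlib

section
/- Let n ≥ 2, a ∈ ℝ, A ∈ ℝ, B ∈ ℝ, and define v(x) = xₙ^a (|x′|² + A) − B·xₙ for x = (x′, xₙ) ∈ ℝⁿ with xₙ > 0. Then for every x with xₙ > 0, the determinant of the Hessian of v satisfies det D²v(x) = 2^{n−1} a · xₙ^{na−2} · [A(a − 1) − (a + 1)|x′|²]. -/
open Metric MeasureTheory Real

/-- The Hessian matrix of `u : ℝⁿ → ℝ` at `x`, with entries the second partial
derivatives `∂²u/∂xᵢ∂xⱼ` computed via iterated Fréchet derivatives. -/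
noncomputable def hessianMatrix {n : ℕ} (u : EuclideanSpace ℝ (Fin n) → ℝ)
    (x : EuclideanSpace ℝ (Fin n)) : Matrix (Fin n) (Fin n) ℝ :=
  Matrix.of fun i j =>
    fderiv ℝ (fun y => fderiv ℝ u y (EuclideanSpace.single j 1)) x (EuclideanSpace.single i 1)

/-- The determinant of the Hessian matrix, `det D²u(x)`. -/
noncomputable def hessianDet {n : ℕ} (u : EuclideanSpace ℝ (Fin n) → ℝ)
    (x : EuclideanSpace ℝ (Fin n)) : ℝ := (hessianMatrix u x).det

/-!
On the half-space the Hessian of `v` is an arrowhead matrix: `2 xₙ^a` on the diagonal of the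
`x′`-block, border entries `2a xₙ^(a-1) xᵢ`, and corner `a(a-1) xₙ^(a-2) (|x′|² + A)`. Taking the
Schur complement of the scalar block gives the determinant
`(2 xₙ^a)^(n-1) (corner - |border|² / (2 xₙ^a))`, which simplifies to the stated formula.
-/

open Finset

theorem det_arrowhead {K : Type*} [Field K] {m : ℕ} {c d : K} {u : Fin (m + 1) → K} (hc : c ≠ 0)
    {M : Matrix (Fin (m + 1)) (Fin (m + 1)) K}
    (hM : ∀ i j, M i j =
      if i = Fin.last m then (if j = Fin.last m then d else u j)
      else if j = Fin.last m then u i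
      else if i = j then c else 0) :
    M.det = c ^ m * (d - c⁻¹ * ∑ i ∈ univ.erase (Fin.last m), u i ^ 2) := by
  have hblocks : M.submatrix finSumFinEquiv finSumFinEquiv =
      Matrix.fromBlocks (c • 1) (Matrix.replicateCol (Fin 1) (u ∘ Fin.castSucc))
        (Matrix.replicateRow (Fin 1) (u ∘ Fin.castSucc)) (Matrix.of fun _ _ => d) := by
    ext (i | i) (j | j) <;>
      simp [hM, Fin.ext_iff, Matrix.one_apply, Fin.val_eq_zero, Fin.is_lt, Nat.ne_of_lt, Fin.castSucc]
  let _ : Invertible (c • (1 : Matrix (Fin m) (Fin m) K)) :=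
    invertibleOfLeftInverse _ (c⁻¹ • 1) (by simp [smul_smul, hc])
  have hinv : ⅟(c • (1 : Matrix (Fin m) (Fin m) K)) = c⁻¹ • 1 := rfl
  rw [← Matrix.det_submatrix_equiv_self finSumFinEquiv, hblocks, Matrix.det_fromBlocks₁₁, hinv,
    Matrix.det_unique (n := Fin 1), sum_erase_eq_sub (mem_univ _),
    Fin.sum_univ_castSucc]
  simp [Matrix.mul_apply, mul_sum, sq]

theorem hessianMatrix_apply_of_eventuallyEq {n : ℕ} {u g : EuclideanSpace ℝ (Fin n) → ℝ}
    {g' : EuclideanSpace ℝ (Fin n) →L[ℝ] ℝ} {x : EuclideanSpace ℝ (Fin n)} {j : Fin n}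
    (hu : (fun y => fderiv ℝ u y (EuclideanSpace.single j 1)) =ᶠ[nhds x] g)
    (hg : HasFDerivAt g g' x) (i : Fin n) :
    hessianMatrix u x i j = g' (EuclideanSpace.single i 1) := by
  rw [hessianMatrix, Matrix.of_apply, hu.fderiv_eq, hg.fderiv]

section PowerProfile

variable {n : ℕ} (N : Fin n) (a A B : ℝ)

/-- The paper's `v`, with the coordinate `N` in the role of `xₙ`. -/
noncomputable def powerProfile (y : EuclideanSpace ℝ (Fin n)) : ℝ :=
  y N ^ a * (∑ i ∈ univ.erase N, y i ^ 2 + A) - B * y N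

variable {N a A B} {y : EuclideanSpace ℝ (Fin n)}

theorem hasFDerivAt_coord (i : Fin n) :
    HasFDerivAt (fun z : EuclideanSpace ℝ (Fin n) => (z i : ℝ)) (EuclideanSpace.proj (𝕜 := ℝ) i) y :=
  (EuclideanSpace.proj (𝕜 := ℝ) i).hasFDerivAt

theorem hasFDerivAt_coord_rpow (hy : 0 < y N) :
    HasFDerivAt (fun z : EuclideanSpace ℝ (Fin n) => z N ^ a)
      ((a * y N ^ (a - 1)) • EuclideanSpace.proj (𝕜 := ℝ) N) y := by
  have hpow : HasDerivAt (fun t : ℝ => t ^ a) (a * y N ^ (a - 1)) (y N) :=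
    Real.hasDerivAt_rpow_const (Or.inl hy.ne')
  exact hpow.comp_hasFDerivAt y (hasFDerivAt_coord N)

theorem hasFDerivAt_sum_coord_sq (s : Finset (Fin n)) :
    HasFDerivAt (fun z : EuclideanSpace ℝ (Fin n) => ∑ i ∈ s, z i ^ 2)
      (∑ i ∈ s, (2 * y i) • EuclideanSpace.proj (𝕜 := ℝ) i) y :=
  HasFDerivAt.fun_sum fun i _ => by
    have hsq : HasDerivAt (fun t : ℝ => t ^ 2) (2 * y i) (y i) := by
      simpa using hasDerivAt_pow 2 (y i)
    exact hsq.comp_hasFDerivAt y (hasFDerivAt_coord i)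

theorem fderiv_powerProfile_single (hy : 0 < y N) (j : Fin n) :
    fderiv ℝ (powerProfile N a A B) y (EuclideanSpace.single j 1) =
      if j = N then a * y N ^ (a - 1) * (∑ i ∈ univ.erase N, y i ^ 2 + A) - B
      else 2 * y N ^ a * y j := by
  have h : HasFDerivAt (powerProfile N a A B) _ y :=
    ((hasFDerivAt_coord_rpow hy).mul ((hasFDerivAt_sum_coord_sq (univ.erase N)).add_const A)).sub
      ((hasFDerivAt_coord N).const_mul B)
  rw [h.fderiv]
  split_ifs with hj
  · subst hj
    simp
    ring
  · simp [Ne.symm hj]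
    ring

theorem eventually_coord_pos (hy : 0 < y N) :
    ∀ᶠ z in nhds y, 0 < (z N : ℝ) :=
  continuousAt_const.eventually_lt (hasFDerivAt_coord N).continuousAt hy

theorem hessianMatrix_powerProfile_apply_self (hy : 0 < y N) (i : Fin n) :
    hessianMatrix (powerProfile N a A B) y i N =
      if i = N then a * (a - 1) * y N ^ (a - 2) * (∑ k ∈ univ.erase N, y k ^ 2 + A)
      else 2 * a * y N ^ (a - 1) * y i := by
  have hpartial : (fun z => fderiv ℝ (powerProfile N a A B) z (EuclideanSpace.single N 1)) =ᶠ[nhds y]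
      fun z => a * z N ^ (a - 1) * (∑ k ∈ univ.erase N, z k ^ 2 + A) - B := by
    filter_upwards [eventually_coord_pos hy] with z hz
    rw [fderiv_powerProfile_single hz, if_pos rfl]
  rw [hessianMatrix_apply_of_eventuallyEq hpartial ((((hasFDerivAt_coord_rpow hy).const_mul a).mul
    ((hasFDerivAt_sum_coord_sq (univ.erase N)).add_const A)).sub_const B)]
  split_ifs with hi
  · subst hi
    simp [sub_sub, one_add_one_eq_two]
    ring
  · simp [Ne.symm hi]
    ring

theorem hessianMatrix_powerProfile_apply_of_ne (hy : 0 < y N) {j : Fin n} (hj : j ≠ N) (i : Fin n) :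
    hessianMatrix (powerProfile N a A B) y i j =
      if i = N then 2 * a * y N ^ (a - 1) * y j
      else if i = j then 2 * y N ^ a else 0 := by
  have hpartial : (fun z => fderiv ℝ (powerProfile N a A B) z (EuclideanSpace.single j 1)) =ᶠ[nhds y]
      fun z => 2 * z N ^ a * z j := by
    filter_upwards [eventually_coord_pos hy] with z hz
    rw [fderiv_powerProfile_single hz, if_neg hj]
  rw [hessianMatrix_apply_of_eventuallyEq hpartial
    (((hasFDerivAt_coord_rpow hy).const_mul 2).mul (hasFDerivAt_coord j))]
  split_ifs with hi hij
  · subst hi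
    simp [hj]
    ring
  · subst hij
    simp [hi]
  · simp [hi, Ne.symm hij]

theorem hessianMatrix_powerProfile_apply (hy : 0 < y N) (i j : Fin n) :
    hessianMatrix (powerProfile N a A B) y i j =
      if i = N then (if j = N then a * (a - 1) * y N ^ (a - 2) * (∑ k ∈ univ.erase N, y k ^ 2 + A)
        else 2 * a * y N ^ (a - 1) * y j)
      else if j = N then 2 * a * y N ^ (a - 1) * y i
      else if i = j then 2 * y N ^ a else 0 := by
  by_cases hj : j = N
  · subst hj
    simp [hessianMatrix_powerProfile_apply_self hy]
  · simp [hessianMatrix_powerProfile_apply_of_ne hy hj, hj]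

end PowerProfile

theorem hessianDet_powerProfile_last {m : ℕ} {a A B : ℝ} {y : EuclideanSpace ℝ (Fin (m + 1))}
    (hy : 0 < y (Fin.last m)) :
    hessianDet (powerProfile (Fin.last m) a A B) y =
      2 ^ m * a * y (Fin.last m) ^ (((m + 1 : ℕ) : ℝ) * a - 2) *
        (A * (a - 1) - (a + 1) * ∑ i ∈ univ.erase (Fin.last m), y i ^ 2) := by
  set t := y (Fin.last m)
  set S := ∑ i ∈ univ.erase (Fin.last m), y i ^ 2
  have hc : 2 * t ^ a ≠ 0 := by positivity
  rw [hessianDet, det_arrowhead hc (hessianMatrix_powerProfile_apply hy)]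
  have hsum : ∑ i ∈ univ.erase (Fin.last m), (2 * a * t ^ (a - 1) * y i) ^ 2
      = (2 * a * t ^ (a - 1)) ^ 2 * S := by
    rw [mul_sum]
    exact sum_congr rfl fun i _ => by ring
  have hpow_a : t ^ a = t ^ (a - 2) * t ^ 2 := by
    rw [← Real.rpow_natCast, ← Real.rpow_add hy]
    norm_num
  have hpow_a_sub_one : t ^ (a - 1) = t ^ (a - 2) * t := by
    rw [← Real.rpow_add_one hy.ne']
    ring_nf
  have hpow_total : t ^ (((m + 1 : ℕ) : ℝ) * a - 2) = (t ^ (a - 2)) ^ (m + 1) * t ^ (2 * m) := by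
    rw [← Real.rpow_natCast, ← Real.rpow_natCast, ← Real.rpow_mul hy.le, ← Real.rpow_add hy]
    push_cast
    ring_nf
  have ht : t ^ (a - 2) ≠ 0 := by positivity
  rw [hsum, hpow_a, hpow_a_sub_one, hpow_total]
  field_simp
  ring

/-- Explicit Hessian determinant of `v(x) = xₙ^a (|x'|² + A) - B xₙ`
on the open upper half-space. -/
theorem stmt_9 (n : ℕ) (hn : 2 ≤ n) (a A B : ℝ)
    (v : EuclideanSpace ℝ (Fin n) → ℝ)
    (hv : v = fun x => x ⟨n - 1, by omega⟩ ^ a *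
        ((∑ i ∈ Finset.univ.erase (⟨n - 1, by omega⟩ : Fin n), x i ^ 2) + A) -
        B * x ⟨n - 1, by omega⟩) :
    ∀ x : EuclideanSpace ℝ (Fin n), 0 < x ⟨n - 1, by omega⟩ →
      hessianDet v x = (2 : ℝ) ^ (n - 1) * a * x ⟨n - 1, by omega⟩ ^ ((n : ℝ) * a - 2) *
        (A * (a - 1) - (a + 1) *
          ∑ i ∈ Finset.univ.erase (⟨n - 1, by omega⟩ : Fin n), x i ^ 2) := by
  obtain ⟨m, rfl⟩ : ∃ m, n = m + 1 := ⟨n - 1, by omega⟩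
  have hlast : (⟨m + 1 - 1, by omega⟩ : Fin (m + 1)) = Fin.last m := Fin.ext (by simp)
  have hv_profile : v = powerProfile (Fin.last m) a A B := by
    rw [hv, hlast]
    rfl
  intro x hx
  rw [hlast] at hx ⊢
  rw [hv_profile, hessianDet_powerProfile_last hx, Nat.add_sub_cancel]
end

section
/- Let Ω ⊂ ℝⁿ (n ≥ 1) be a bounded open set, and let v, w be continuous on the closure of Ω and twice continuously differentiable in Ω. Assume v is convex in Ω, det D²v(x) > det D²w(x) for all x ∈ Ω, and v ≤ w on ∂Ω. Then v ≤ w on the closure of Ω. -/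
/-!
Let `x₀` be a maximum point of `v - w` on the compact set `closure Ω`. If `x₀` were in `Ω`, the
Hessian of `v - w` at `x₀` would be negative semidefinite, i.e. `D²w(x₀) = D²v(x₀) + P` with `P`
positive semidefinite. Since `D²v(x₀)` is positive semidefinite too and the determinant is monotone
on positive semidefinite matrices, `det D²w(x₀) ≥ det D²v(x₀)`, contradicting the hypothesis. So
`x₀ ∈ ∂Ω`, where `v - w ≤ 0`.
-/

open Metric MeasureTheory Real

open Matrix Filter Topology

section DetMonotone

variable {ι : Type*} [Fintype ι] [DecidableEq ι]

theorem Matrix.PosSemidef.one_le_det_one_add {M : Matrix ι ι ℝ} (hM : M.PosSemidef) :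
    1 ≤ (1 + M).det := by
  have hN : (1 + M).IsHermitian := isHermitian_one.add hM.isHermitian
  rw [hN.det_eq_prod_eigenvalues]
  refine Finset.one_le_prod fun i _ => ?_
  have hi : hN.eigenvalues i - 1 ∈ spectrum ℝ M := by
    rw [← spectrum.add_mem_add_iff (s := 1), sub_add_cancel, map_one]
    exact hN.eigenvalues_mem_spectrum_real i
  rw [hM.isHermitian.spectrum_real_eq_range_eigenvalues] at hi
  obtain ⟨j, hj⟩ := hi
  simpa using sub_nonneg.mp (hj ▸ hM.eigenvalues_nonneg j)

open scoped MatrixOrder in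
theorem Matrix.PosSemidef.det_le_det_add {A C : Matrix ι ι ℝ} (hA : A.PosSemidef)
    (hC : C.PosSemidef) : A.det ≤ (A + C).det := by
  rcases hA.det_nonneg.eq_or_lt with hA0 | hApos
  · exact hA0 ▸ (hA.add hC).det_nonneg
  obtain ⟨B, rfl⟩ := CStarAlgebra.nonneg_iff_eq_star_mul_self.mp hA.nonneg
  have hB : IsUnit B.det :=
    isUnit_iff_ne_zero.mpr fun h => hApos.ne' (by rw [det_mul, h, mul_zero])
  have hsplit : star B * B + C = star B * (1 + B⁻¹ᴴ * C * B⁻¹) * B := by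
    have hstar : star B * B⁻¹ᴴ = 1 := by
      rw [star_eq_conjTranspose, ← conjTranspose_mul, nonsing_inv_mul _ hB, conjTranspose_one]
    rw [mul_add, add_mul, mul_one, show star B * (B⁻¹ᴴ * C * B⁻¹) * B =
      star B * B⁻¹ᴴ * C * (B⁻¹ * B) by simp only [Matrix.mul_assoc], hstar,
      nonsing_inv_mul _ hB, Matrix.one_mul, Matrix.mul_one]
  calc (star B * B).det
      ≤ (star B * B).det * (1 + B⁻¹ᴴ * C * B⁻¹).det :=
        le_mul_of_one_le_right hApos.le (hC.conjTranspose_mul_mul_same B⁻¹).one_le_det_one_add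
    _ = (star B * B + C).det := by rw [hsplit]; simp only [det_mul]; ring

end DetMonotone

section SecondDerivativeTest

theorem IsLocalMax.deriv_deriv_nonpos {g : ℝ → ℝ} {a : ℝ} (h : IsLocalMax g a)
    (hc : ContinuousAt g a) : deriv (deriv g) a ≤ 0 := by
  by_contra! hpos
  have hmin := isLocalMin_of_deriv_deriv_pos hpos h.deriv_eq_zero hc
  have hconst : g =ᶠ[𝓝 a] fun _ => g a :=
    (hmin.and h).mono fun y hy => le_antisymm hy.2 hy.1
  have hderiv : deriv g =ᶠ[𝓝 a] fun _ => 0 := by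
    simpa using hconst.deriv
  rw [hderiv.deriv_eq, deriv_const] at hpos
  exact hpos.false

variable {E : Type*} [NormedAddCommGroup E] [NormedSpace ℝ E] {f : E → ℝ} {a : E}

theorem ContDiffAt.eventually_differentiableAt (hf : ContDiffAt ℝ 2 f a) :
    ∀ᶠ y in 𝓝 a, DifferentiableAt ℝ f y :=
  (hf.eventually (by simp)).mono fun _ hy => hy.differentiableAt two_ne_zero

theorem ContDiffAt.differentiableAt_fderiv (hf : ContDiffAt ℝ 2 f a) :
    DifferentiableAt ℝ (fderiv ℝ f) a :=
  (hf.fderiv_right (m := 1) (by norm_num)).differentiableAt one_ne_zero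

theorem IsLocalMax.fderiv_fderiv_apply_self_nonpos (h : IsLocalMax f a)
    (hf : ∀ᶠ y in 𝓝 a, DifferentiableAt ℝ f y) (hf' : DifferentiableAt ℝ (fderiv ℝ f) a)
    (v : E) : fderiv ℝ (fderiv ℝ f) a v v ≤ 0 := by
  have hline (t : ℝ) : HasDerivAt (fun s : ℝ => a + s • v) v t := by
    simpa using ((hasDerivAt_id t).smul_const v).const_add a
  have hline0 : a = a + (0 : ℝ) • v := by simp
  have htends : Tendsto (fun s : ℝ => a + s • v) (𝓝 0) (𝓝 a) := by
    simpa using (hline 0).continuousAt.tendsto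
  have hderiv : deriv (fun s : ℝ => f (a + s • v)) =ᶠ[𝓝 (0 : ℝ)]
      fun s : ℝ => fderiv ℝ f (a + s • v) v := by
    filter_upwards [htends.eventually hf] with t ht
    exact (ht.hasFDerivAt.comp_hasDerivAt t (hline t)).deriv
  have hderiv2 : HasDerivAt (fun s : ℝ => fderiv ℝ f (a + s • v) v)
      (fderiv ℝ (fderiv ℝ f) a v v) (0 : ℝ) :=
    (ContinuousLinearMap.apply ℝ ℝ v).hasFDerivAt.comp_hasDerivAt 0
      (hf'.hasFDerivAt.comp_hasDerivAt_of_eq 0 (hline 0) hline0)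
  have hmax : IsLocalMax (fun s : ℝ => f (a + s • v)) 0 :=
    IsLocalMax.comp_continuous (f := f) (g := fun s : ℝ => a + s • v) (by simpa using h)
      (hline 0).continuousAt
  have hcont : ContinuousAt (fun s : ℝ => f (a + s • v)) 0 :=
    hf.self_of_nhds.continuousAt.comp_of_eq (hline 0).continuousAt hline0.symm
  simpa [hderiv.deriv_eq, hderiv2.deriv] using hmax.deriv_deriv_nonpos hcont

end SecondDerivativeTest

section Hessian

variable {n : ℕ} {u v w : EuclideanSpace ℝ (Fin n) → ℝ} {x : EuclideanSpace ℝ (Fin n)}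

theorem hessianMatrix_eq_toMatrix₂ (hu : DifferentiableAt ℝ (fderiv ℝ u) x) :
    hessianMatrix u x = LinearMap.toMatrix₂ (EuclideanSpace.basisFun (Fin n) ℝ).toBasis
      (EuclideanSpace.basisFun (Fin n) ℝ).toBasis
      (ContinuousLinearMap.toLinearMap₁₂ (fderiv ℝ (fderiv ℝ u) x)) := by
  ext i j
  have hentry := ((ContinuousLinearMap.apply ℝ ℝ (EuclideanSpace.single j (1 : ℝ))).hasFDerivAt.comp
    x hu.hasFDerivAt).fderiv
  simp only [LinearMap.toMatrix₂_apply, OrthonormalBasis.coe_toBasis,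
    EuclideanSpace.basisFun_apply]
  exact congrArg (fun L => L (EuclideanSpace.single i 1)) hentry

theorem hessianMatrix_dotProduct_mulVec (hu : DifferentiableAt ℝ (fderiv ℝ u) x)
    (e : Fin n → ℝ) :
    e ⬝ᵥ hessianMatrix u x *ᵥ e = fderiv ℝ (fderiv ℝ u) x (WithLp.toLp 2 e) (WithLp.toLp 2 e) := by
  rw [hessianMatrix_eq_toMatrix₂ hu]
  exact dotProduct_toMatrix₂_mulVec (EuclideanSpace.basisFun (Fin n) ℝ).toBasis
    (EuclideanSpace.basisFun (Fin n) ℝ).toBasis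
    (ContinuousLinearMap.toLinearMap₁₂ (fderiv ℝ (fderiv ℝ u) x)) e e

theorem ContDiffAt.isHermitian_hessianMatrix (hu : ContDiffAt ℝ 2 u x) :
    (hessianMatrix u x).IsHermitian := by
  have hsymm := hu.isSymmSndFDerivAt (by simp)
  ext i j
  simp [hessianMatrix_eq_toMatrix₂ hu.differentiableAt_fderiv, hsymm _ _]

theorem IsLocalMax.posSemidef_neg_hessianMatrix (h : IsLocalMax u x) (hu : ContDiffAt ℝ 2 u x) :
    (-hessianMatrix u x).PosSemidef :=
  .of_dotProduct_mulVec_nonneg hu.isHermitian_hessianMatrix.neg fun e => by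
    rw [neg_mulVec, dotProduct_neg, star_trivial,
      hessianMatrix_dotProduct_mulVec hu.differentiableAt_fderiv, neg_nonneg]
    exact h.fderiv_fderiv_apply_self_nonpos hu.eventually_differentiableAt
      hu.differentiableAt_fderiv _

theorem hessianMatrix_sub (hv : ContDiffAt ℝ 2 v x) (hw : ContDiffAt ℝ 2 w x) :
    hessianMatrix (v - w) x = hessianMatrix v x - hessianMatrix w x := by
  have hfderiv : fderiv ℝ (v - w) =ᶠ[𝓝 x] fderiv ℝ v - fderiv ℝ w := by
    filter_upwards [hv.eventually_differentiableAt, hw.eventually_differentiableAt]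
      with y hvy hwy
    exact fderiv_sub hvy hwy
  have hfderiv2 : fderiv ℝ (fderiv ℝ (v - w)) x =
      fderiv ℝ (fderiv ℝ v) x - fderiv ℝ (fderiv ℝ w) x := by
    rw [hfderiv.fderiv_eq]
    exact fderiv_sub hv.differentiableAt_fderiv hw.differentiableAt_fderiv
  have hvw : ContDiffAt ℝ 2 (v - w) x := hv.sub hw
  rw [hessianMatrix_eq_toMatrix₂ hvw.differentiableAt_fderiv,
    hessianMatrix_eq_toMatrix₂ hv.differentiableAt_fderiv,
    hessianMatrix_eq_toMatrix₂ hw.differentiableAt_fderiv, hfderiv2, map_sub, map_sub]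

theorem hessianDet_le_of_isLocalMax_sub (hv : ContDiffAt ℝ 2 v x) (hw : ContDiffAt ℝ 2 w x)
    (hvconv : (hessianMatrix v x).PosSemidef) (hmax : IsLocalMax (v - w) x) :
    hessianDet v x ≤ hessianDet w x := by
  have := hvconv.det_le_det_add (hmax.posSemidef_neg_hessianMatrix (hv.sub hw))
  rwa [hessianMatrix_sub hv hw, neg_sub, add_sub_cancel] at this

end Hessian

theorem stmt_15_general (n : ℕ)
    (Ω : Set (EuclideanSpace ℝ (Fin n)))
    (hΩo : IsOpen Ω) (hΩb : Bornology.IsBounded Ω)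
    (v w : EuclideanSpace ℝ (Fin n) → ℝ)
    (hvc : ContinuousOn v (closure Ω)) (hwc : ContinuousOn w (closure Ω))
    (hv2 : ContDiffOn ℝ 2 v Ω) (hw2 : ContDiffOn ℝ 2 w Ω)
    (hvconv : ∀ x ∈ Ω, (hessianMatrix v x).PosSemidef)
    (hdet : ∀ x ∈ Ω, hessianDet w x < hessianDet v x)
    (hbd : ∀ x ∈ frontier Ω, v x ≤ w x) :
    ∀ x ∈ closure Ω, v x ≤ w x := by
  intro x hx
  obtain ⟨x₀, hx₀, hmax⟩ := hΩb.isCompact_closure.exists_isMaxOn ⟨x, hx⟩ (hvc.sub hwc)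
  have hx₀_frontier : x₀ ∈ frontier Ω := by
    rw [hΩo.frontier_eq]
    refine ⟨hx₀, fun hx₀Ω => (hdet x₀ hx₀Ω).not_ge ?_⟩
    have hΩ_nhds := hΩo.mem_nhds hx₀Ω
    exact hessianDet_le_of_isLocalMax_sub (hv2.contDiffAt hΩ_nhds) (hw2.contDiffAt hΩ_nhds)
      (hvconv x₀ hx₀Ω) ((hmax.on_subset subset_closure).isLocalMax hΩ_nhds)
  have hle : v x - w x ≤ v x₀ - w x₀ := hmax hx
  linarith [hbd x₀ hx₀_frontier]

/-- Classical comparison principle on a bounded open (not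
necessarily convex) set: if `v` is convex in `Ω` (for a `C²` function this
means its Hessian is positive semidefinite pointwise in `Ω`),
`det D²v > det D²w` in `Ω`, and `v ≤ w` on `∂Ω`, then `v ≤ w` on `closure Ω`. -/
theorem stmt_15 (n : ℕ) (hn : 1 ≤ n)
    (Ω : Set (EuclideanSpace ℝ (Fin n)))
    (hΩo : IsOpen Ω) (hΩb : Bornology.IsBounded Ω)
    (v w : EuclideanSpace ℝ (Fin n) → ℝ)
    (hvc : ContinuousOn v (closure Ω)) (hwc : ContinuousOn w (closure Ω))
    (hv2 : ContDiffOn ℝ 2 v Ω) (hw2 : ContDiffOn ℝ 2 w Ω)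
    (hvconv : ∀ x ∈ Ω, (hessianMatrix v x).PosSemidef)
    (hdet : ∀ x ∈ Ω, hessianDet w x < hessianDet v x)
    (hbd : ∀ x ∈ frontier Ω, v x ≤ w x) :
    ∀ x ∈ closure Ω, v x ≤ w x :=
  stmt_15_general n Ω hΩo hΩb v w hvc hwc hv2 hw2 hvconv hdet hbd
end
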